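/- arXiv:2012.00502 — 7 statements merged into one kernel-verified Lean document; each statement's English description precedes it below -/
import Mathlib

section
/- Let p ≡ 1 (mod 4) be a prime, n = (p-1)/2, and let d be an integer that is a quadratic residue modulo p. The map sending i^2 mod p to d·i^2 mod p (for 1 ≤ i ≤ n) is a permutation π_p(d) of the set of nonzero quadratic residues modulo p, and its sign equals 1 if d is a fourth power modulo p, and -1 otherwise. -/
open scoped Classical

/-- The permutation of the nonzero quadratic residues modulo `p` (viewed as the
squares in `(ZMod p)ˣ`) given by multiplication by a square unit `u`. -/
noncomputable def piP (p : ℕ) [Fact p.Prime] (u : (ZMod p)ˣ) (hu : IsSquare u) :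
    Equiv.Perm {x : (ZMod p)ˣ // IsSquare x} where
  toFun x := ⟨u * x, hu.mul x.2⟩
  invFun x := ⟨u⁻¹ * x, hu.inv.mul x.2⟩
  left_inv x := by ext; simp [mul_assoc]
  right_inv x := by ext; simp [mul_assoc]

/-! Multiplication by `d` is multiplication in the group `Q` of nonzero squares mod `p`, which is
cyclic of order `(p - 1) / 2`, even because `-1 ∈ Q`. Multiplication by a generator of `Q` is one
cycle of even length, hence odd, so `g ↦ sign (mulLeft g)` is a nontrivial character of `Q`. Its
kernel is then the index-two subgroup of squares of `Q`, that is, of fourth powers mod `p`. -/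

section CyclicGroup

variable {G : Type*} [Group G]

lemma mulLeft_zpow (a : G) (m : ℤ) : Equiv.mulLeft a ^ m = Equiv.mulLeft (a ^ m) :=
  (map_zpow (MulAction.toPermHom G G) a m).symm

lemma isCycle_mulLeft {a : G} (ha : a ≠ 1) (hgen : ∀ x, x ∈ Subgroup.zpowers a) :
    (Equiv.mulLeft a).IsCycle := by
  refine ⟨1, by simpa using ha, fun y _ => ?_⟩
  obtain ⟨m, rfl⟩ := Subgroup.mem_zpowers_iff.mp (hgen y)
  exact ⟨m, by rw [mulLeft_zpow]; exact mul_one _⟩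

variable [Fintype G] [DecidableEq G]

lemma support_mulLeft {a : G} (ha : a ≠ 1) : (Equiv.mulLeft a).support = Finset.univ :=
  Finset.eq_univ_of_forall fun _ =>
    Equiv.Perm.mem_support.mpr fun hx => ha (mul_eq_right.mp hx)

lemma sign_mulLeft_of_generator (hG : Even (Nat.card G)) {a : G}
    (hgen : ∀ x, x ∈ Subgroup.zpowers a) : Equiv.Perm.sign (Equiv.mulLeft a) = -1 := by
  have ha : a ≠ 1 := by
    rintro rfl
    rw [← orderOf_eq_card_of_forall_mem_zpowers hgen, orderOf_one] at hG
    exact Nat.not_even_one hG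
  rw [(isCycle_mulLeft ha hgen).sign, support_mulLeft ha, Finset.card_univ,
    ← Nat.card_eq_fintype_card, hG.neg_one_pow]

theorem sign_mulLeft_eq_ite [IsCyclic G] (hG : Even (Nat.card G)) (g : G) :
    Equiv.Perm.sign (Equiv.mulLeft g) = if IsSquare g then 1 else -1 := by
  have hsign (h : G) (m : ℤ) :
      Equiv.Perm.sign (Equiv.mulLeft (h ^ m)) = Equiv.Perm.sign (Equiv.mulLeft h) ^ m := by
    rw [← mulLeft_zpow, map_zpow]
  split_ifs with hsq
  · obtain ⟨r, rfl⟩ := hsq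
    simpa [← sq, Int.units_sq] using hsign r 2
  · obtain ⟨a, hgen⟩ := IsCyclic.exists_generator (α := G)
    obtain ⟨k, rfl⟩ := Subgroup.mem_zpowers_iff.mp (hgen g)
    have hk : Odd k := Int.not_even_iff_odd.mp fun ⟨j, hj⟩ => hsq ⟨a ^ j, by rw [hj, zpow_add]⟩
    rw [hsign, sign_mulLeft_of_generator hG hgen, hk.neg_one_zpow]

end CyclicGroup

lemma isSquare_mk_square_iff {M : Type*} [CommGroup M] {u : M} (hu : u ∈ Subgroup.square M) :
    IsSquare (⟨u, hu⟩ : Subgroup.square M) ↔ ∃ w : M, u = w ^ 4 := by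
  constructor
  · rintro ⟨⟨r, w, rfl⟩, hr⟩
    refine ⟨w, ?_⟩
    rw [show u = w * w * (w * w) from congrArg Subtype.val hr]
    simp [pow_succ, mul_assoc]
  · rintro ⟨w, rfl⟩
    exact ⟨⟨w ^ 2, w, sq w⟩, Subtype.ext (by rw [Subgroup.coe_mul, ← pow_add])⟩

lemma exists_units_pow_eq_iff {M : Type*} [GroupWithZero M] {u : Mˣ} {n : ℕ} (hn : n ≠ 0) :
    (∃ w : Mˣ, u = w ^ n) ↔ ∃ y : M, y ^ n = u := by
  constructor
  · rintro ⟨w, rfl⟩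
    exact ⟨w, by simp⟩
  · rintro ⟨y, hy⟩
    have hy0 : y ≠ 0 := by
      rintro rfl
      exact u.ne_zero (by rw [← hy, zero_pow hn])
    exact ⟨Units.mk0 y hy0, Units.ext (by simp [hy])⟩

lemma even_card_square_units {p : ℕ} [Fact p.Prime] (hp4 : p % 4 = 1) :
    Even (Nat.card (Subgroup.square (ZMod p)ˣ)) := by
  have : Fact (2 < p) := ⟨by have := (Fact.out : p.Prime).two_le; omega⟩
  have hneg : IsSquare (-1 : (ZMod p)ˣ) := by
    obtain ⟨r, hr⟩ := (ZMod.exists_sq_eq_neg_one_iff (p := p)).mpr (by omega)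
    obtain ⟨w, hw⟩ := (exists_units_pow_eq_iff (u := -1) two_ne_zero).mpr ⟨r, by simp [sq, hr]⟩
    exact ⟨w, by rw [hw, sq]⟩
  have hord : orderOf (⟨-1, hneg⟩ : Subgroup.square (ZMod p)ˣ) = 2 := by
    rw [← Subgroup.orderOf_coe]
    refine orderOf_eq_prime (by simp) fun h => ZMod.neg_one_ne_one (n := p) ?_
    simpa using congrArg Units.val h
  exact even_iff_two_dvd.mpr (hord ▸ orderOf_dvd_natCard _)

lemma sign_piP_eq_sign_mulLeft (p : ℕ) [Fact p.Prime] (u : (ZMod p)ˣ) (hu : IsSquare u) :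
    Equiv.Perm.sign (piP p u hu) =
      Equiv.Perm.sign
        (Equiv.mulLeft (⟨u, Subgroup.mem_square.mpr hu⟩ : Subgroup.square (ZMod p)ˣ)) := by
  rw [← Equiv.Perm.sign_permCongr (Equiv.subtypeEquivRight fun _ => Subgroup.mem_square)]
  rfl

theorem stmt0_general (p : ℕ) [Fact p.Prime] (hp4 : p % 4 = 1) (d : ℤ)
    (u : (ZMod p)ˣ) (hud : (u : ZMod p) = (d : ZMod p)) (hu : IsSquare u) :
    Equiv.Perm.sign (piP p u hu) =
      if ∃ y : ZMod p, y ^ 4 = (d : ZMod p) then 1 else -1 := by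
  rw [sign_piP_eq_sign_mulLeft, sign_mulLeft_eq_ite (even_card_square_units hp4)]
  simp only [isSquare_mk_square_iff, exists_units_pow_eq_iff four_ne_zero, hud]

theorem stmt0 (p : ℕ) [Fact p.Prime] (hp4 : p % 4 = 1) (d : ℤ)
    (hd : legendreSym p d = 1)
    (u : (ZMod p)ˣ) (hud : (u : ZMod p) = (d : ZMod p)) (hu : IsSquare u) :
    Equiv.Perm.sign (piP p u hu) =
      if ∃ y : ZMod p, y ^ 4 = (d : ZMod p) then 1 else -1 :=
  stmt0_general p hp4 d u hud hu
end

section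
/- Let p ≡ 1 (mod 4) be a prime, n = (p-1)/2, and d a quadratic residue modulo p. Then sgn(π_p(d)) ≡ d^((p-1)/4) (mod p). -/
/-!
The squares form a cyclic subgroup `H` of `(ZMod p)ˣ` of even order `2t = (p - 1) / 2`.
Multiplication by a generator `h` of `H` is a single `2t`-cycle, hence odd, so if `u = h ^ k`
then `π_p(u)` has sign `(-1) ^ k`. On the other side `h ^ t = -1`, being a primitive square
root of unity, so `u ^ t = (-1) ^ k` as well.
-/

open scoped Classical

open Equiv Subgroup

theorem isCycle_toPerm_of_forall_mem_zpowers {G : Type*} [Group G] {g : G}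
    (hg : ∀ x, x ∈ zpowers g) (hg1 : g ≠ 1) : (MulAction.toPerm g : Perm G).IsCycle := by
  refine ⟨1, by simpa using hg1, fun y _ => ?_⟩
  obtain ⟨k, rfl⟩ := hg y
  refine ⟨k, ?_⟩
  rw [← MulAction.coe_toPermHom, ← map_zpow, MulAction.coe_toPermHom, MulAction.toPerm_apply,
    smul_eq_mul, mul_one]

theorem sign_toPerm_of_forall_mem_zpowers {G : Type*} [Group G] [DecidableEq G] [Fintype G]
    {g : G} (hg : ∀ x, x ∈ zpowers g) :
    Perm.sign (MulAction.toPerm g : Perm G) = -(-1) ^ Fintype.card G := by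
  by_cases hg1 : g = 1
  · have hcard : Fintype.card G = 1 :=
      Fintype.card_eq_one_iff.2 ⟨1, fun x => by simpa [hg1] using hg x⟩
    have hone : (MulAction.toPerm (1 : G) : Perm G) = 1 := by ext; simp
    simp [hg1, hone, hcard]
  · have hsupp : (MulAction.toPerm g : Perm G).support = Finset.univ := by
      ext x; simpa using hg1
    rw [(isCycle_toPerm_of_forall_mem_zpowers hg hg1).sign, hsupp, Finset.card_univ]

theorem square_eq_range_powMonoidHom (G : Type*) [CommGroup G] :
    square G = (powMonoidHom 2 : G →* G).range := by
  ext x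
  simp [IsSquare, sq, eq_comm]

theorem card_square_units_zmod (p : ℕ) [Fact p.Prime] (hp : p ≠ 2) :
    Nat.card (square (ZMod p)ˣ) = (p - 1) / 2 := by
  rw [square_eq_range_powMonoidHom, IsCyclic.card_powMonoidHom_range, Nat.card_eq_fintype_card,
    ZMod.card_units, Nat.gcd_eq_right]
  obtain ⟨k, rfl⟩ := (Fact.out : p.Prime).odd_of_ne_two hp
  exact ⟨k, by omega⟩

theorem pow_eq_neg_one_of_orderOf_eq_two_mul {R : Type*} [CommRing R] [NoZeroDivisors R] {ζ : R}
    {m : ℕ} (hζ : orderOf ζ = 2 * m) (hm : m ≠ 0) : ζ ^ m = -1 :=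
  ((IsPrimitiveRoot.orderOf ζ).pow (by omega) (hζ.trans (mul_comm 2 m))).eq_neg_one_of_two_right

theorem sign_piP (p : ℕ) [Fact p.Prime] (u : (ZMod p)ˣ) (hu : IsSquare u) :
    Perm.sign (piP p u hu) =
      Perm.sign (MulAction.toPerm (⟨u, hu⟩ : square (ZMod p)ˣ) : Perm (square (ZMod p)ˣ)) := by
  rw [← Perm.sign_permCongr (Equiv.subtypeEquivRight fun _ => mem_square.symm)]
  rfl

theorem stmt1_general (p : ℕ) [Fact p.Prime] (hp4 : p % 4 = 1) (d : ℤ)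
    (u : (ZMod p)ˣ) (hud : (u : ZMod p) = (d : ZMod p)) (hu : IsSquare u) :
    ((Equiv.Perm.sign (piP p u hu) : ℤ) : ZMod p) = (d : ZMod p) ^ ((p - 1) / 4) := by
  have hp2 := (Fact.out : p.Prime).two_le
  obtain ⟨t, ht⟩ : ∃ t, p - 1 = 4 * t := ⟨(p - 1) / 4, by omega⟩
  have hcard : Fintype.card (square (ZMod p)ˣ) = 2 * t := by
    rw [← Nat.card_eq_fintype_card, card_square_units_zmod p (by omega)]
    omega
  obtain ⟨h, hgen⟩ := IsCyclic.exists_generator (α := square (ZMod p)ˣ)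
  obtain ⟨k, hk⟩ : ∃ k : ℕ, h ^ k = ⟨u, hu⟩ := mem_powers_iff_mem_zpowers.2 (hgen _)
  have hsign : Perm.sign (piP p u hu) = (-1) ^ k := by
    rw [sign_piP, ← hk, ← MulAction.coe_toPermHom, map_pow, map_pow,
      MulAction.coe_toPermHom, sign_toPerm_of_forall_mem_zpowers hgen, hcard, pow_mul]
    simp
  have hroot : ((h : (ZMod p)ˣ) : ZMod p) ^ t = -1 := by
    refine pow_eq_neg_one_of_orderOf_eq_two_mul ?_ (by omega)
    rw [orderOf_units, Subgroup.orderOf_coe, orderOf_eq_card_of_forall_mem_zpowers hgen,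
      Nat.card_eq_fintype_card, hcard]
  have hk' : (h : (ZMod p)ˣ) ^ k = u := congrArg Subtype.val hk
  rw [hsign, ← hud, show (p - 1) / 4 = t by omega, ← hk']
  push_cast
  rw [← pow_mul, mul_comm, pow_mul, hroot]

theorem stmt1 (p : ℕ) [Fact p.Prime] (hp4 : p % 4 = 1) (d : ℤ)
    (hd : legendreSym p d = 1)
    (u : (ZMod p)ˣ) (hud : (u : ZMod p) = (d : ZMod p)) (hu : IsSquare u) :
    ((Equiv.Perm.sign (piP p u hu) : ℤ) : ZMod p) = (d : ZMod p) ^ ((p - 1) / 4) :=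
  stmt1_general p hp4 d u hud hu
end

section
/- Let p be an odd prime, n = (p-1)/2, χ a multiplicative character modulo p, and define the vector v = (χ(1^2), χ(2^2), ..., χ(n^2))^T. Then the matrix M_p = [((i^2+j^2)/p)]_{1≤i,j≤n} (Legendre symbol entries) satisfies M_p v = λ v, where λ = Σ_{j=1}^{n} ((1+j^2)/p) χ(j^2). -/
/-!
For `c ≠ 0` the substitution `u ↦ c u` turns `∑_{u ∈ 𝔽_p} ((c² + u²)/p) χ(u²)` into
`((c²)/p) χ(c²) ∑_u ((1 + u²)/p) χ(u²)`, and `((c²)/p) = 1`. Over all of `𝔽_p` the term `u = 0`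
vanishes since `χ(0) = 0`, while `u` and `-u` cover `±1, …, ±n` exactly once each, so both sums
are twice the corresponding sums over `j = 1, …, n`. Halving, with `c = i`, gives the `i`-th
coordinate of `M_p v = λ v`.
-/

open Finset

theorem ZMod.sum_univ_eq_sum_range {M : Type*} [AddCommMonoid M] {N : ℕ} [NeZero N]
    (g : ZMod N → M) : ∑ u, g u = ∑ k ∈ range N, g k :=
  sum_nbij' ZMod.val (↑) (fun u _ => mem_range.mpr u.val_lt) (fun _ _ => mem_univ _)
    (fun u _ => ZMod.natCast_zmod_val u) (fun _ hk => ZMod.val_cast_of_lt (mem_range.mp hk))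
    (fun u _ => congrArg g (ZMod.natCast_zmod_val u).symm)

theorem Finset.sum_range_add_one_eq_sum_Icc {M : Type*} [AddCommMonoid M] (g : ℕ → M) (m : ℕ) :
    ∑ k ∈ range m, g (k + 1) = ∑ j ∈ Icc 1 m, g j := by
  rw [← Nat.Ico_zero_eq_range, ← Ico_add_one_right_eq_Icc, sum_Ico_add' g]

theorem ZMod.sum_sq_eq_add_two_nsmul_sum_Icc {M : Type*} [AddCommMonoid M] {N : ℕ} [NeZero N]
    (hN : Odd N) (f : ZMod N → M) :
    ∑ u, f (u ^ 2) = f 0 + 2 • ∑ j ∈ Icc 1 ((N - 1) / 2), f ((j : ZMod N) ^ 2) := by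
  obtain ⟨m, rfl⟩ := hN
  have hm : (2 * m + 1 - 1) / 2 = m := by omega
  have reflect : ∀ k ∈ range m, f (((m + (m - 1 - k) + 1 : ℕ) : ZMod (2 * m + 1)) ^ 2) =
      f (((k + 1 : ℕ) : ZMod (2 * m + 1)) ^ 2) := by
    intro k hk
    have hsum : ((m + (m - 1 - k) + 1 : ℕ) : ZMod (2 * m + 1)) + ((k + 1 : ℕ) : ZMod _) = 0 := by
      rw [← Nat.cast_add, ← ZMod.natCast_self (2 * m + 1)]
      have := mem_range.mp hk
      congr 1
      omega
    rw [eq_neg_of_add_eq_zero_left hsum, neg_sq]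
  rw [hm, ZMod.sum_univ_eq_sum_range, sum_range_succ',
    show range (2 * m) = range (m + m) by rw [two_mul], sum_range_add,
    ← sum_range_reflect (fun k => f (((m + k + 1 : ℕ) : ZMod (2 * m + 1)) ^ 2)) m,
    sum_congr rfl reflect, ← two_nsmul, ← sum_range_add_one_eq_sum_Icc, add_comm]
  simp

theorem MulChar.sum_apply_sq_add_sq_mul {F R : Type*} [Field F] [Fintype F] [CommRing R]
    (ψ χ : MulChar F R) {c : F} (hc : c ≠ 0) :
    ∑ u, ψ (c ^ 2 + u ^ 2) * χ (u ^ 2) =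
      ψ (c ^ 2) * χ (c ^ 2) * ∑ u, ψ (1 + u ^ 2) * χ (u ^ 2) := by
  rw [← Fintype.sum_bijective (c * ·) (mulLeft_bijective₀ c hc) _ _ fun _ => rfl, mul_sum]
  refine sum_congr rfl fun u _ => ?_
  rw [show c ^ 2 + (c * u) ^ 2 = c ^ 2 * (1 + u ^ 2) by ring, mul_pow, map_mul, map_mul]
  ring

theorem ZMod.sum_Icc_apply_sq_add_sq_mul {p : ℕ} [Fact p.Prime] (hp2 : p ≠ 2) {R : Type*}
    [CommRing R] [NoZeroDivisors R] [CharZero R] (ψ χ : MulChar (ZMod p) R) {c : ZMod p}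
    (hc : c ≠ 0) :
    ∑ j ∈ Icc 1 ((p - 1) / 2), ψ (c ^ 2 + (j : ZMod p) ^ 2) * χ ((j : ZMod p) ^ 2) =
      ψ (c ^ 2) * χ (c ^ 2) *
        ∑ j ∈ Icc 1 ((p - 1) / 2), ψ (1 + (j : ZMod p) ^ 2) * χ ((j : ZMod p) ^ 2) := by
  have hodd : Odd p := Nat.Prime.odd_of_ne_two Fact.out hp2
  have key := MulChar.sum_apply_sq_add_sq_mul ψ χ hc
  rw [sum_sq_eq_add_two_nsmul_sum_Icc hodd (fun x => ψ (c ^ 2 + x) * χ x),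
    sum_sq_eq_add_two_nsmul_sum_Icc hodd (fun x => ψ (1 + x) * χ x)] at key
  simp only [MulChar.map_zero, mul_zero, zero_add, nsmul_eq_mul, Nat.cast_ofNat] at key
  exact mul_left_cancel₀ two_ne_zero (by rw [key]; ring)

theorem stmt3 (p : ℕ) [Fact p.Prime] (hp2 : p ≠ 2) (χ : MulChar (ZMod p) ℂ) :
    (Matrix.of fun i j : Fin ((p - 1) / 2) =>
        ((legendreSym p (((i : ℤ) + 1) ^ 2 + ((j : ℤ) + 1) ^ 2) : ℤ) : ℂ)).mulVec
      (fun i : Fin ((p - 1) / 2) => χ ((((i : ℕ) + 1 : ℕ) : ZMod p) ^ 2)) =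
    (∑ j ∈ Finset.Icc 1 ((p - 1) / 2),
        ((legendreSym p (1 + (j : ℤ) ^ 2) : ℤ) : ℂ) * χ (((j : ℕ) : ZMod p) ^ 2)) •
      (fun i : Fin ((p - 1) / 2) => χ ((((i : ℕ) + 1 : ℕ) : ZMod p) ^ 2)) := by
  set ψ : MulChar (ZMod p) ℂ := (quadraticChar (ZMod p)).ringHomComp (Int.castRingHom ℂ)
  have hψ (a : ℤ) : ((legendreSym p a : ℤ) : ℂ) = ψ a := rfl
  funext i
  set c : ZMod p := (((i : ℕ) + 1 : ℕ) : ZMod p)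
  have hc : c ≠ 0 := by
    rw [Ne, ZMod.natCast_eq_zero_iff]
    exact Nat.not_dvd_of_pos_of_lt i.val.succ_pos (by omega)
  have hψc : ψ (c ^ 2) = 1 := by simp [ψ, quadraticChar_sq_one' hc]
  have hrow (j : Fin ((p - 1) / 2)) :
      ((legendreSym p (((i : ℤ) + 1) ^ 2 + ((j : ℤ) + 1) ^ 2) : ℤ) : ℂ) *
          χ ((((j : ℕ) + 1 : ℕ) : ZMod p) ^ 2) =
        ψ (c ^ 2 + (((j : ℕ) + 1 : ℕ) : ZMod p) ^ 2) * χ ((((j : ℕ) + 1 : ℕ) : ZMod p) ^ 2) := by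
    rw [hψ]
    push_cast [c]
    rfl
  simp only [Matrix.mulVec, dotProduct, Matrix.of_apply, Pi.smul_apply, smul_eq_mul]
  rw [sum_congr rfl fun j _ => hrow j,
    Fin.sum_univ_eq_sum_range
      (fun k => ψ (c ^ 2 + ((k + 1 : ℕ) : ZMod p) ^ 2) * χ (((k + 1 : ℕ) : ZMod p) ^ 2)),
    sum_range_add_one_eq_sum_Icc (fun j => ψ (c ^ 2 + (j : ZMod p) ^ 2) * χ ((j : ZMod p) ^ 2)),
    ZMod.sum_Icc_apply_sq_add_sq_mul hp2 ψ χ hc, hψc]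
  simp only [hψ, Int.cast_add, Int.cast_one, Int.cast_pow, Int.cast_natCast]
  ring
end

section
/- Let p = a^2 + 4b^2 be a prime with a, b integers and a ≡ 1 (mod 4), and n = (p-1)/2. Then Σ_{j=1}^{n} ((1+j^2)/p) · (j/p) = -a, where (·/p) is the Legendre symbol. -/
/-!
Write `χ` for the quadratic character of `𝔽_p` and `φ(c) = ∑ₓ χ(x) χ(x² + c)` for the Jacobsthal
sum. Substituting `x ↦ t x` gives `φ(t² c) = χ(t) φ(c)`, and expanding `∑_c φ(c)²` gives
`2p(p - 1)`; hence `φ(1)² + φ(r)² = 4p` for any non-residue `r`. As `χ(-1) = 1`, the summands are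
even in `x`, so `φ(c)` is twice the sum over `1 ≤ x ≤ (p - 1)/2`; for `c = 1` that half sum is the
sum `S` of the theorem, and so `p = S² + U²`. The summand for `c = 1` is also invariant under
`x ↦ x⁻¹`, and pairing `j` with the representative of `±j⁻¹` in `[1, (p - 1)/2]` (fixed points
`1` and `√-1`) shows `S ≡ -1 (mod 4)`. The odd part of a representation of `p` as a sum of two
squares is unique up to sign, so `S = ±a`, and the congruences modulo `4` decide the sign.
-/

open Finset

namespace Finset

lemma sum_modEq_four_of_involution {ι : Type*} [DecidableEq ι] {s : Finset ι} {σ : ι → ι}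
    {g : ι → ℤ} (hσ : ∀ i ∈ s, σ i ∈ s) (hσσ : ∀ i ∈ s, σ (σ i) = i)
    (hg : ∀ i ∈ s, g (σ i) = g i) (hg₁ : ∀ i ∈ s, σ i ≠ i → g i = 1 ∨ g i = -1) :
    ∑ i ∈ s, g i ≡ ∑ i ∈ s, (if σ i = i then g i else 1) [ZMOD 4] := by
  rw [show (4 : ℤ) = ((4 : ℕ) : ℤ) from rfl, ← ZMod.intCast_eq_intCast_iff, ← sub_eq_zero,
    ← Int.cast_sub, ← sum_sub_distrib]
  push_cast
  -- off the fixed points, the terms `g i - 1 ∈ {0, -2}` come in equal pairs, which vanish mod 4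
  refine sum_involution (fun i _ => σ i) (fun i hi => ?_) (fun i hi h hfix => ?_)
    (fun i hi => hσ i hi) (fun i hi => hσσ i hi)
  · by_cases hfix : σ i = i
    · simp [hfix]
    · have hfix' : σ (σ i) ≠ σ i := by rwa [hσσ i hi, ne_comm]
      rw [if_neg hfix, if_neg hfix', hg i hi]
      rcases hg₁ i hi hfix with h | h <;> rw [h] <;> decide
  · simp [hfix] at h

lemma sum_ite_eq_or_eq {ι : Type*} [DecidableEq ι] {s : Finset ι} {a b : ι} (ha : a ∈ s)
    (hb : b ∈ s) (hab : a ≠ b) (f : ι → ℤ) :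
    ∑ j ∈ s, (if j = a ∨ j = b then f j else 1) = f a + f b + #s - 2 := by
  have h : ∀ j, (if j = a ∨ j = b then f j else 1) =
      1 + if j ∈ ({a, b} : Finset ι) then f j - 1 else 0 := fun j => by
    simp only [mem_insert, mem_singleton]
    split_ifs <;> ring
  rw [sum_congr rfl fun j _ => h j, sum_add_distrib, sum_ite_mem,
    inter_eq_right.mpr (insert_subset ha (singleton_subset_iff.mpr hb)), sum_pair hab]
  simp only [sum_const, nsmul_eq_mul, mul_one]
  ring

end Finset

section TwoSquares

variable {P A C T U : ℤ}

lemma sq_eq_sq_of_sq_add_sq_eq_of_dvd (hP : Prime P) (hPodd : Odd P) (hA : Odd A) (hT : Odd T)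
    (hAC : A ^ 2 + C ^ 2 = P) (hTU : T ^ 2 + U ^ 2 = P) (hdvd : P ∣ A * U - C * T) :
    A ^ 2 = T ^ 2 := by
  obtain ⟨y, hy⟩ := hdvd
  have hP0 := hP.ne_zero
  -- `(A² + C²)(T² + U²) = (AT + CU)² + (AU - CT)²`
  have hX : (A * T + C * U) ^ 2 = P ^ 2 * (1 - y ^ 2) := by
    linear_combination (T ^ 2 + U ^ 2) * hAC + P * hTU - (A * U - C * T + P * y) * hy
  have hy1 : y ^ 2 ≤ 1 := by
    nlinarith [sq_nonneg (A * T + C * U), pow_pos (sq_pos_of_ne_zero hP0) 1]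
  have hsum_ne : A ^ 2 + T ^ 2 ≠ P := fun h =>
    Int.not_even_iff_odd.mpr hPodd (h ▸ hA.pow.add_odd hT.pow)
  have hX0 : y ^ 2 = 1 → A * T + C * U = 0 := fun h1 => by
    rw [h1, sub_self, mul_zero] at hX
    exact pow_eq_zero_iff two_ne_zero |>.mp hX
  obtain ⟨hy₁, hy₂⟩ : -1 ≤ y ∧ y ≤ 1 := ⟨by nlinarith, by nlinarith⟩
  interval_cases y
  · refine absurd (mul_left_cancel₀ hP0 ?_) hsum_ne
    linear_combination (A * T - C * U) * hX0 (by norm_num) + U ^ 2 * hAC + (P - A ^ 2) * hTU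
  · refine mul_left_cancel₀ hP0 ?_
    linear_combination (A * U + C * T) * hy - A ^ 2 * hTU + T ^ 2 * hAC
  · refine absurd (mul_left_cancel₀ hP0 ?_) hsum_ne
    linear_combination (A * T - C * U) * hX0 (by norm_num) + U ^ 2 * hAC + (P - A ^ 2) * hTU

lemma sq_eq_sq_of_sq_add_sq_eq (hP : Prime P) (hPodd : Odd P) (hA : Odd A) (hT : Odd T)
    (hAC : A ^ 2 + C ^ 2 = P) (hTU : T ^ 2 + U ^ 2 = P) : A ^ 2 = T ^ 2 := by
  have hdvd : P ∣ (A * U - C * T) * (A * U - -C * T) :=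
    ⟨A ^ 2 - T ^ 2, by linear_combination A ^ 2 * hTU - T ^ 2 * hAC⟩
  rcases hP.dvd_or_dvd hdvd with h | h
  · exact sq_eq_sq_of_sq_add_sq_eq_of_dvd hP hPodd hA hT hAC hTU h
  · exact sq_eq_sq_of_sq_add_sq_eq_of_dvd hP hPodd hA hT (by rwa [neg_sq]) hTU h

end TwoSquares

namespace ZMod

variable {n : ℕ}

lemma natAbs_valMinAbs_eq_iff {j : ℕ} (hj : j ≤ n / 2) (x : ZMod n) :
    x.valMinAbs.natAbs = j ↔ x = j ∨ x = -j := by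
  have h := natAbs_valMinAbs_eq_natAbs_valMinAbs (a := x) (b := (j : ZMod n))
  rwa [valMinAbs_natCast_of_le_half hj, Int.natAbs_natCast] at h

lemma natAbs_valMinAbs_mem_Icc [NeZero n] {x : ZMod n} (hx : x ≠ 0) :
    x.valMinAbs.natAbs ∈ Icc 1 (n / 2) := by
  simp [Nat.one_le_iff_ne_zero, hx, natAbs_valMinAbs_le]

lemma natCast_ne_zero_of_mem_Icc {j : ℕ} (hj : j ∈ Icc 1 (n / 2)) : (j : ZMod n) ≠ 0 := by
  intro h
  have := (natAbs_valMinAbs_eq_iff (mem_Icc.mp hj).2 0).mpr (Or.inl h.symm)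
  simp only [valMinAbs_zero, Int.natAbs_zero] at this
  exact absurd (mem_Icc.mp hj).1 (by omega)

lemma sum_eq_two_nsmul_sum_Icc [NeZero n] (hn : Odd n) {M : Type*} [AddCommMonoid M]
    (g : ZMod n → M) (h0 : g 0 = 0) (hg : ∀ x, g (-x) = g x) :
    ∑ x, g x = 2 • ∑ j ∈ Icc 1 (n / 2), g j := by
  have hmaps : ∀ x ∈ univ.erase (0 : ZMod n), x.valMinAbs.natAbs ∈ Icc 1 (n / 2) :=
    fun x hx => natAbs_valMinAbs_mem_Icc (ne_of_mem_erase hx)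
  rw [← sum_erase univ h0, ← sum_fiberwise_of_maps_to hmaps, smul_sum]
  refine sum_congr rfl fun j hj => ?_
  have hj0 := natCast_ne_zero_of_mem_Icc hj
  have hfiber : {x ∈ univ.erase (0 : ZMod n) | x.valMinAbs.natAbs = j} =
      {(j : ZMod n), -(j : ZMod n)} := by
    ext x
    simp only [mem_filter, mem_erase, mem_univ, and_true, mem_insert, mem_singleton,
      natAbs_valMinAbs_eq_iff (mem_Icc.mp hj).2]
    constructor
    · exact And.right
    · rintro (rfl | rfl) <;> simp [hj0]
  have hneg : (j : ZMod n) ≠ -j := fun h => by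
    rcases (neg_eq_self_iff _).mp h.symm with h | h
    · exact hj0 h
    · rw [val_natCast_of_lt (by grind)] at h
      grind
  rw [hfiber, sum_pair hneg, hg, two_nsmul]

variable {p : ℕ} [Fact p.Prime]

lemma sq_natCast_eq_sq_iff {j : ℕ} (hj : j ≤ p / 2) (y : ZMod p) :
    (j : ZMod p) ^ 2 = y ^ 2 ↔ y.valMinAbs.natAbs = j := by
  rw [natAbs_valMinAbs_eq_iff hj, sq_eq_sq_iff_eq_or_eq_neg, eq_comm]
  exact or_congr Iff.rfl (eq_comm.trans neg_eq_iff_eq_neg)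

/-- The representative in `[1, p / 2]` of `±j⁻¹` modulo `p`. -/
def invHalfRep (p j : ℕ) : ℕ := ((j : ZMod p)⁻¹).valMinAbs.natAbs

lemma invHalfRep_mem {j : ℕ} (hj : j ∈ Icc 1 (p / 2)) : invHalfRep p j ∈ Icc 1 (p / 2) :=
  natAbs_valMinAbs_mem_Icc (inv_ne_zero (natCast_ne_zero_of_mem_Icc hj))

lemma natCast_invHalfRep {j : ℕ} (hj : j ∈ Icc 1 (p / 2)) :
    (invHalfRep p j : ZMod p) = (j : ZMod p)⁻¹ ∨ (invHalfRep p j : ZMod p) = -(j : ZMod p)⁻¹ := by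
  rcases (natAbs_valMinAbs_eq_iff (mem_Icc.mp (invHalfRep_mem hj)).2 _).mp rfl with h | h
  · exact Or.inl h.symm
  · exact Or.inr (by rw [h, neg_neg])

lemma invHalfRep_invHalfRep {j : ℕ} (hj : j ∈ Icc 1 (p / 2)) :
    invHalfRep p (invHalfRep p j) = j := by
  refine (natAbs_valMinAbs_eq_iff (mem_Icc.mp hj).2 _).mpr ?_
  rcases natCast_invHalfRep hj with h | h <;> rw [h]
  · exact Or.inl (inv_inv _)
  · exact Or.inr (by rw [inv_neg, inv_inv])

lemma invHalfRep_eq_self_iff {j : ℕ} (hj : j ∈ Icc 1 (p / 2)) :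
    invHalfRep p j = j ↔ (j : ZMod p) ^ 2 = 1 ∨ (j : ZMod p) ^ 2 = -1 := by
  have hj0 := natCast_ne_zero_of_mem_Icc hj
  have hsq : ∀ ε : ZMod p, (j : ZMod p) = ε * (j : ZMod p)⁻¹ ↔ (j : ZMod p) ^ 2 = ε := fun ε => by
    rw [eq_mul_inv_iff_mul_eq₀ hj0, sq]
  rw [invHalfRep, natAbs_valMinAbs_eq_iff (mem_Icc.mp hj).2, inv_eq_iff_eq_inv, inv_eq_iff_eq_inv,
    inv_neg, ← hsq, ← hsq, one_mul, neg_one_mul]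

lemma invHalfRep_eq_self_iff_of_sq_eq_neg_one {i : ZMod p} (hi : i ^ 2 = -1) {j : ℕ}
    (hj : j ∈ Icc 1 (p / 2)) : invHalfRep p j = j ↔ j = 1 ∨ j = i.valMinAbs.natAbs := by
  have h1 : 1 ≤ p / 2 := (mem_Icc.mp hj).1.trans (mem_Icc.mp hj).2
  rw [invHalfRep_eq_self_iff hj, ← hi, sq_natCast_eq_sq_iff (mem_Icc.mp hj).2, ← one_pow 2,
    ← Nat.cast_one, sq_natCast_eq_sq_iff (mem_Icc.mp hj).2, valMinAbs_natCast_of_le_half h1,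
    Int.natAbs_natCast, eq_comm (a := 1), eq_comm (b := j)]

end ZMod

section FiniteField

variable {F : Type*} [Field F] [Fintype F] [DecidableEq F]

local notation "χ" => quadraticChar F
local notation "q" => Fintype.card F

lemma sum_quadraticChar_sq : ∑ x : F, χ (x ^ 2) = q - 1 := by
  have h : ∀ x : F, χ (x ^ 2) = if x = 0 then 0 else 1 := fun x => by
    split_ifs with hx
    · simp [hx]
    · exact quadraticChar_sq_one' hx
  simp [h, sum_ite, filter_ne', Nat.cast_sub Fintype.card_pos]

lemma sum_quadraticChar_mul_add (hF : ringChar F ≠ 2) {d : F} (hd : d ≠ 0) :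
    ∑ x, χ x * χ (x + d) = -1 := by
  have hJ : jacobiSum χ χ = -χ (-1) := by
    simpa [(quadraticChar_isQuadratic F).inv] using
      jacobiSum_nontrivial_inv (quadraticChar_ne_one hF)
  calc ∑ x, χ x * χ (x + d)
      = ∑ y, χ (-d * y) * χ (-d * y + d) :=
        (Fintype.sum_equiv (Equiv.mulLeft₀ (-d) (neg_ne_zero.mpr hd)) _ _ fun _ => rfl).symm
    _ = ∑ y, χ (-1) * (χ d ^ 2 * (χ y * χ (1 - y))) := by
        refine sum_congr rfl fun y _ => ?_
        rw [show -d * y + d = d * (1 - y) by ring, show -d * y = -1 * d * y by ring]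
        simp only [map_mul]
        ring
    _ = -1 := by
        rw [← mul_sum, ← mul_sum, ← jacobiSum, hJ, quadraticChar_sq_one hd, one_mul, mul_neg,
          ← sq, quadraticChar_sq_one (neg_ne_zero.mpr one_ne_zero)]

lemma sum_quadraticChar_add_mul_add (hF : ringChar F ≠ 2) (u v : F) :
    ∑ c, χ ((u + c) * (v + c)) = if u = v then (q : ℤ) - 1 else -1 := by
  rw [← Fintype.sum_equiv (Equiv.addLeft (-u)) (fun x => χ (x * (x + (v - u)))) _
    fun x => by simp only [Equiv.coe_addLeft]; ring_nf]
  split_ifs with h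
  · simp_rw [h, sub_self, add_zero, ← sq, sum_quadraticChar_sq]
  · simp_rw [map_mul]
    exact sum_quadraticChar_mul_add hF (sub_ne_zero.mpr (Ne.symm h))

lemma sum_ite_sq_eq_sq_quadraticChar_mul (hF : ringChar F ≠ 2) (h₁ : χ (-1) = 1) (x : F) :
    ∑ y, (if x ^ 2 = y ^ 2 then χ (x * y) else 0) = if x = 0 then 0 else 2 := by
  have hxy : ∀ y, (if x ^ 2 = y ^ 2 then χ (x * y) else 0) =
      if y ^ 2 = x ^ 2 then χ (x ^ 2) else 0 := fun y => by
    by_cases h : y ^ 2 = x ^ 2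
    · rw [if_pos h.symm, if_pos h]
      rcases sq_eq_sq_iff_eq_or_eq_neg.mp h with rfl | rfl
      · rw [sq]
      · rw [mul_neg, ← neg_one_mul, map_mul, h₁, one_mul, sq]
    · rw [if_neg (Ne.symm h), if_neg h]
  have hcard := quadraticChar_card_sqrts hF (x ^ 2)
  simp only [Set.toFinset_ofPred] at hcard
  rw [sum_congr rfl fun y _ => hxy y, ← sum_filter, sum_const, nsmul_eq_mul, hcard]
  split_ifs with hx
  · simp [hx]
  · rw [quadraticChar_sq_one' hx]
    norm_num

def jacobsthalTerm (c x : F) : ℤ := χ x * χ (x ^ 2 + c)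

def jacobsthalSum (c : F) : ℤ := ∑ x, jacobsthalTerm c x

lemma jacobsthalTerm_neg (h₁ : χ (-1) = 1) (c x : F) :
    jacobsthalTerm c (-x) = jacobsthalTerm c x := by
  rw [jacobsthalTerm, jacobsthalTerm, neg_sq, neg_eq_neg_one_mul, map_mul, h₁, one_mul]

lemma jacobsthalTerm_one_inv (x : F) : jacobsthalTerm 1 x⁻¹ = jacobsthalTerm 1 x := by
  rcases eq_or_ne x 0 with rfl | hx
  · rw [inv_zero]
  rw [jacobsthalTerm, jacobsthalTerm, show x⁻¹ = x⁻¹ ^ 2 * x by field_simp,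
    show (x⁻¹ ^ 2 * x) ^ 2 + 1 = x⁻¹ ^ 2 * (x ^ 2 + 1) by field_simp; ring]
  simp only [map_mul, quadraticChar_sq_one' (inv_ne_zero hx)]
  ring

lemma jacobsthalTerm_eq_one_or_eq_neg_one {c x : F} (hx : x ≠ 0) (hxc : x ^ 2 + c ≠ 0) :
    jacobsthalTerm c x = 1 ∨ jacobsthalTerm c x = -1 := by
  rw [jacobsthalTerm, ← map_mul]
  exact quadraticChar_dichotomy (mul_ne_zero hx hxc)

lemma sum_jacobsthalSum_sq (hF : ringChar F ≠ 2) (h₁ : χ (-1) = 1) :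
    ∑ c : F, jacobsthalSum c ^ 2 = 2 * q * (q - 1) := by
  calc ∑ c : F, jacobsthalSum c ^ 2
      = ∑ x : F, ∑ y : F, χ (x * y) * ∑ c : F, χ ((x ^ 2 + c) * (y ^ 2 + c)) := by
        simp_rw [jacobsthalSum, jacobsthalTerm, sq, sum_mul_sum, mul_sum]
        rw [sum_comm]
        refine sum_congr rfl fun x _ => ?_
        rw [sum_comm]
        refine sum_congr rfl fun y _ => sum_congr rfl fun c _ => ?_
        simp only [map_mul]
        ring
    _ = q * ∑ x, ∑ y, (if x ^ 2 = y ^ 2 then χ (x * y) else 0) - (∑ x, χ x) ^ 2 := by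
        simp_rw [sum_quadraticChar_add_mul_add hF, mul_sum, sq, sum_mul_sum, ← sum_sub_distrib]
        refine sum_congr rfl fun x _ => sum_congr rfl fun y _ => ?_
        split_ifs <;> simp only [map_mul] <;> ring
    _ = 2 * q * (q - 1) := by
        simp_rw [sum_ite_sq_eq_sq_quadraticChar_mul hF h₁, quadraticChar_sum_zero hF]
        simp [sum_ite, filter_ne', Nat.cast_sub Fintype.card_pos]
        ring

lemma jacobsthalSum_zero (hF : ringChar F ≠ 2) : jacobsthalSum (0 : F) = 0 := by
  have h : ∀ x : F, jacobsthalTerm 0 x = χ x := fun x => by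
    rw [jacobsthalTerm, add_zero, map_pow]
    rcases eq_or_ne x 0 with rfl | hx
    · simp
    · rw [quadraticChar_sq_one hx, mul_one]
  simp_rw [jacobsthalSum, h, quadraticChar_sum_zero hF]

lemma jacobsthalSum_sq_mul {t : F} (ht : t ≠ 0) (c : F) :
    jacobsthalSum (t ^ 2 * c) = χ t * jacobsthalSum c := by
  rw [jacobsthalSum, jacobsthalSum, mul_sum]
  refine (Fintype.sum_equiv (Equiv.mulLeft₀ t ht) _ _ fun x => ?_).symm
  rw [Equiv.mulLeft₀_apply, jacobsthalTerm, jacobsthalTerm,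
    show (t * x) ^ 2 + t ^ 2 * c = t ^ 2 * (x ^ 2 + c) by ring]
  simp only [map_mul, quadraticChar_sq_one' ht]
  ring

lemma jacobsthalSum_sq_eq_of_quadraticChar_eq {c d : F} (hc : c ≠ 0) (hd : d ≠ 0)
    (h : χ c = χ d) : jacobsthalSum c ^ 2 = jacobsthalSum d ^ 2 := by
  obtain ⟨s, hs⟩ : IsSquare (c * d) := by
    rw [← quadraticChar_one_iff_isSquare (mul_ne_zero hc hd), map_mul, h, ← sq,
      quadraticChar_sq_one hd]
  have ht : s / d ≠ 0 := div_ne_zero (by rintro rfl; simp [hc, hd] at hs) hd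
  rw [show c = (s / d) ^ 2 * d by field_simp; linear_combination hs, jacobsthalSum_sq_mul ht,
    mul_pow, quadraticChar_sq_one ht, one_mul]

lemma jacobsthalSum_one_sq_add_sq (hF : ringChar F ≠ 2) (h₁ : χ (-1) = 1) {r : F}
    (hr : χ r = -1) : jacobsthalSum (1 : F) ^ 2 + jacobsthalSum r ^ 2 = 4 * q := by
  have hr0 : r ≠ 0 := by rintro rfl; simp at hr
  -- `φ(c)²` is `φ(1)²` at the nonzero squares and `φ(r)²` at the non-squares
  have hpoint : ∀ c : F, 2 * jacobsthalSum c ^ 2 = (χ c ^ 2 + χ c) * jacobsthalSum (1 : F) ^ 2 +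
      (χ c ^ 2 - χ c) * jacobsthalSum r ^ 2 := fun c => by
    rcases eq_or_ne c 0 with rfl | hc
    · simp [jacobsthalSum_zero hF]
    rcases quadraticChar_dichotomy hc with h | h
    · rw [jacobsthalSum_sq_eq_of_quadraticChar_eq hc one_ne_zero (h.trans (map_one _).symm), h]
      ring
    · rw [jacobsthalSum_sq_eq_of_quadraticChar_eq hc hr0 (h.trans hr.symm), h]
      ring
  have hsum := congrArg (2 * ·) (sum_jacobsthalSum_sq hF h₁)
  simp only [mul_sum, hpoint, sum_add_distrib, ← sum_mul, sum_sub_distrib, ← map_pow,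
    sum_quadraticChar_sq, quadraticChar_sum_zero hF] at hsum
  have hq : (q : ℤ) - 1 ≠ 0 := sub_ne_zero.mpr (by exact_mod_cast Fintype.one_lt_card.ne')
  apply mul_left_cancel₀ hq
  linear_combination hsum

end FiniteField

section PrimeOneModFour

variable {p : ℕ} [Fact p.Prime]

local notation "χ" => quadraticChar (ZMod p)

lemma ringChar_zmod_ne_two (hp : p % 4 = 1) : ringChar (ZMod p) ≠ 2 := by
  rw [ZMod.ringChar_zmod_n]; omega

lemma quadraticChar_zmod_neg_one (hp : p % 4 = 1) : χ (-1) = 1 := by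
  rw [quadraticChar_neg_one (ringChar_zmod_ne_two hp), ZMod.card, ZMod.χ₄_nat_one_mod_four hp]

lemma jacobsthalSum_eq_two_mul_sum_Icc (hp : p % 4 = 1) (c : ZMod p) :
    jacobsthalSum c = 2 * ∑ j ∈ Icc 1 (p / 2), jacobsthalTerm c (j : ZMod p) := by
  rw [jacobsthalSum, ZMod.sum_eq_two_nsmul_sum_Icc (Nat.odd_iff.mpr (by omega)) _
    (by simp [jacobsthalTerm]) (jacobsthalTerm_neg (quadraticChar_zmod_neg_one hp) c), two_nsmul,
    two_mul]

lemma quadraticChar_two_add_half_modEq (hp : p % 4 = 1) :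
    χ 2 + (p / 2 : ℕ) - 2 ≡ -1 [ZMOD 4] := by
  have h2 := legendreSym.at_two (p := p) (by omega)
  rw [ZMod.χ₈_nat_eq_if_mod_eight, legendreSym, Int.cast_ofNat] at h2
  rw [h2, Int.ModEq]
  split_ifs <;> omega

lemma sum_Icc_jacobsthalTerm_one_modEq (hp : p % 4 = 1) :
    ∑ j ∈ Icc 1 (p / 2), jacobsthalTerm 1 (j : ZMod p) ≡ -1 [ZMOD 4] := by
  obtain ⟨i, hi⟩ := ZMod.exists_sq_eq_neg_one_iff.mpr (by omega : p % 4 ≠ 3)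
  rw [← sq, eq_comm] at hi
  set j₀ := i.valMinAbs.natAbs
  have hj₀ : j₀ ∈ Icc 1 (p / 2) := ZMod.natAbs_valMinAbs_mem_Icc (by rintro rfl; simp at hi)
  have h1 : 1 ∈ Icc 1 (p / 2) := mem_Icc.mpr ⟨le_rfl, (mem_Icc.mp hj₀).1.trans (mem_Icc.mp hj₀).2⟩
  have hj₀_sq : (j₀ : ZMod p) ^ 2 = -1 := by
    rw [← hi, ZMod.sq_natCast_eq_sq_iff (mem_Icc.mp hj₀).2]
  have h1j₀ : 1 ≠ j₀ := fun h => Ring.neg_one_ne_one_of_char_ne_two (ringChar_zmod_ne_two hp)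
    (by rw [← hj₀_sq, ← h, Nat.cast_one, one_pow])
  have hσ : ∀ j ∈ Icc 1 (p / 2), jacobsthalTerm (1 : ZMod p) (ZMod.invHalfRep p j : ZMod p) =
      jacobsthalTerm 1 (j : ZMod p) := fun j hj => by
    rcases ZMod.natCast_invHalfRep hj with h | h <;> rw [h]
    · exact jacobsthalTerm_one_inv _
    · rw [jacobsthalTerm_neg (quadraticChar_zmod_neg_one hp), jacobsthalTerm_one_inv]
  have hunit : ∀ j ∈ Icc 1 (p / 2), ZMod.invHalfRep p j ≠ j →
      jacobsthalTerm (1 : ZMod p) j = 1 ∨ jacobsthalTerm (1 : ZMod p) j = -1 := fun j hj hfix =>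
    jacobsthalTerm_eq_one_or_eq_neg_one (ZMod.natCast_ne_zero_of_mem_Icc hj) fun h =>
      hfix ((ZMod.invHalfRep_eq_self_iff hj).mpr (Or.inr (eq_neg_of_add_eq_zero_left h)))
  calc ∑ j ∈ Icc 1 (p / 2), jacobsthalTerm 1 (j : ZMod p)
      ≡ ∑ j ∈ Icc 1 (p / 2),
          (if ZMod.invHalfRep p j = j then jacobsthalTerm 1 (j : ZMod p) else 1) [ZMOD 4] :=
        sum_modEq_four_of_involution (g := fun j : ℕ => jacobsthalTerm (1 : ZMod p) j)
          (fun _ => ZMod.invHalfRep_mem) (fun _ => ZMod.invHalfRep_invHalfRep) hσ hunit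
    _ = ∑ j ∈ Icc 1 (p / 2), (if j = 1 ∨ j = j₀ then jacobsthalTerm 1 (j : ZMod p) else 1) :=
        sum_congr rfl fun j hj =>
          if_congr (ZMod.invHalfRep_eq_self_iff_of_sq_eq_neg_one hi hj) rfl rfl
    _ = χ 2 + (p / 2 : ℕ) - 2 := by
        rw [sum_ite_eq_or_eq h1 hj₀ h1j₀, Nat.card_Icc, Nat.add_sub_cancel]
        simp [jacobsthalTerm, hj₀_sq, one_add_one_eq_two]
    _ ≡ -1 [ZMOD 4] := quadraticChar_two_add_half_modEq hp

lemma legendreSym_one_add_sq_mul (j : ℕ) :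
    legendreSym p (1 + (j : ℤ) ^ 2) * legendreSym p j = jacobsthalTerm 1 (j : ZMod p) := by
  simp only [legendreSym, jacobsthalTerm]
  push_cast
  rw [mul_comm, add_comm]

end PrimeOneModFour

theorem stmt5 (p : ℕ) [Fact p.Prime] (a b : ℤ) (hp : (p : ℤ) = a ^ 2 + 4 * b ^ 2)
    (ha : a % 4 = 1) :
    ∑ j ∈ Finset.Icc 1 ((p - 1) / 2),
        legendreSym p (1 + (j : ℤ) ^ 2) * legendreSym p (j : ℤ) = -a := by
  have hp4 : p % 4 = 1 := by
    obtain ⟨k, rfl⟩ : ∃ k, a = 4 * k + 1 := ⟨a / 4, by omega⟩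
    have : (p : ℤ) = 4 * (4 * k ^ 2 + 2 * k + b ^ 2) + 1 := by rw [hp]; ring
    omega
  rw [show (p - 1) / 2 = p / 2 by omega]
  simp only [legendreSym_one_add_sq_mul]
  have hF := ringChar_zmod_ne_two hp4
  obtain ⟨r, hr⟩ := quadraticChar_exists_neg_one hF
  have hpSU := jacobsthalSum_one_sq_add_sq hF (quadraticChar_zmod_neg_one hp4) hr
  rw [jacobsthalSum_eq_two_mul_sum_Icc hp4, jacobsthalSum_eq_two_mul_sum_Icc hp4, ZMod.card] at hpSU
  have hS := sum_Icc_jacobsthalTerm_one_modEq hp4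
  set S := ∑ j ∈ Icc 1 (p / 2), jacobsthalTerm 1 (j : ZMod p)
  set U := ∑ j ∈ Icc 1 (p / 2), jacobsthalTerm r (j : ZMod p)
  rw [Int.ModEq] at hS
  have haS : a ^ 2 = S ^ 2 :=
    sq_eq_sq_of_sq_add_sq_eq (C := 2 * b) (U := U) (Nat.prime_iff_prime_int.mp (Fact.out : p.Prime))
      (Int.odd_iff.mpr (by omega)) (Int.odd_iff.mpr (by omega)) (Int.odd_iff.mpr (by omega))
      (by rw [hp]; ring) (by linarith)
  rcases sq_eq_sq_iff_eq_or_eq_neg.mp haS with h | h <;> omega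
end

section
/- Let p ≡ 1 (mod 4) be a prime, n = (p-1)/2, χ_p a generator of the character group modulo p, and λ_k = Σ_{j=1}^{n} ((1+j^2)/p) χ_p^k(j^2). Then the product ∏_{k=1}^{(p-5)/4} λ_k is a rational integer. -/
/-!
Write `n = (p - 1) / 2 = 2 * m + 2`. The summands of `λ_k` are even in `j`, so `2 * λ_k` is the
same sum over all `x ≠ 0`; substituting `x ↦ x⁻¹` leaves `((1 + x²)/p)` unchanged and inverts the
`n`-th root of unity `χ(x²)`, whence `λ_k = λ_l` whenever `n ∣ k + l`. Writing `χ(j²) = ζ ^ e_j`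
with `ζ` a primitive `n`-th root of unity, the automorphism `ζ ↦ ζ ^ t` of `ℚ(ζ)` sends `λ_k` to
`λ_{tk}`; multiplication by `t` permutes the classes `±1, …, ±m` modulo `n`, so it fixes
`∏_{k=1}^m λ_k`, which is therefore a rational algebraic integer.
-/

open Finset Polynomial IntermediateField

namespace ZMod

theorem natAbs_valMinAbs_natCast_of_le_half {n k : ℕ} (hk : k ≤ n / 2) :
    (k : ZMod n).valMinAbs.natAbs = k := by
  rw [valMinAbs_natCast_of_le_half hk, Int.natAbs_natCast]

theorem apply_natAbs_valMinAbs_of_neg_eq {n : ℕ} [NeZero n] {M : Type*} {f : ZMod n → M}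
    (hf : ∀ x, f (-x) = f x) (x : ZMod n) : f (x.valMinAbs.natAbs : ZMod n) = f x := by
  rw [natCast_natAbs_valMinAbs]
  split_ifs
  · rfl
  · exact hf x

theorem two_mul_eq_zero_of_natAbs_valMinAbs_eq_half {n : ℕ} (hn : Even n) {x : ZMod n}
    (hx : x.valMinAbs.natAbs = n / 2) : 2 * x = 0 := by
  have h2 : (2 : ℤ) * (n / 2 : ℕ) = n := by exact_mod_cast Nat.two_mul_div_two_of_even hn
  have hdvd : (n : ℤ) ∣ 2 * x.valMinAbs := by
    rcases Int.natAbs_eq x.valMinAbs with h | h <;> rw [h, hx]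
    · rw [h2]
    · rw [mul_neg, h2, dvd_neg]
  rw [← coe_valMinAbs x]
  exact_mod_cast (intCast_zmod_eq_zero_iff_dvd _ n).mpr hdvd

theorem sum_erase_zero_eq_two_nsmul_sum_Icc {M : Type*} [AddCommMonoid M] {n : ℕ} [NeZero n]
    (hn : Odd n) {f : ZMod n → M} (hf : ∀ x, f (-x) = f x) :
    ∑ x ∈ univ.erase 0, f x = 2 • ∑ j ∈ Icc 1 (n / 2), f j := by
  have hmaps (x : ZMod n) (hx : x ∈ univ.erase 0) : x.valMinAbs.natAbs ∈ Icc 1 (n / 2) := by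
    rw [mem_Icc, Nat.one_le_iff_ne_zero, Ne, Int.natAbs_eq_zero, valMinAbs_eq_zero]
    exact ⟨ne_of_mem_erase hx, natAbs_valMinAbs_le x⟩
  rw [← sum_fiberwise_of_maps_to hmaps, smul_sum]
  refine sum_congr rfl fun j hj => ?_
  rw [mem_Icc] at hj
  have hj0 : (j : ZMod n) ≠ 0 := by
    rw [Ne, ← valMinAbs_eq_zero, valMinAbs_natCast_of_le_half hj.2]
    omega
  have hfiber : {x ∈ (univ : Finset (ZMod n)).erase 0 | x.valMinAbs.natAbs = j} =
      {(j : ZMod n), -(j : ZMod n)} := by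
    ext x
    rw [mem_filter, mem_insert, mem_singleton, ← natAbs_valMinAbs_eq_natAbs_valMinAbs,
      natAbs_valMinAbs_natCast_of_le_half hj.2, mem_erase, and_iff_right_iff_imp]
    intro h
    refine ⟨fun hx => ?_, mem_univ _⟩
    rw [hx, valMinAbs_zero, Int.natAbs_zero] at h
    omega
  have hneg : (j : ZMod n) ≠ -j := by
    intro h
    rcases (neg_eq_self_iff _).mp h.symm with h | h
    · exact hj0 h
    · exact (Nat.not_even_iff_odd.mpr hn) ⟨_, h.symm.trans (two_mul _)⟩
  rw [hfiber, sum_pair hneg, hf, two_nsmul]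

-- The classes `±k`, `1 ≤ k ≤ m`, partition `{x | 2 * x ≠ 0}`, which is stable under `u * ·`.
theorem prod_Icc_comp_unit_mul_of_neg_eq {M : Type*} [CommMonoid M] {n m : ℕ}
    (hn : n = 2 * m + 2) {u : ZMod n} (hu : IsUnit u) {f : ZMod n → M}
    (hf : ∀ x, f (-x) = f x) :
    ∏ k ∈ Icc 1 m, f (u * k) = ∏ k ∈ Icc 1 m, f k := by
  have : NeZero n := ⟨by omega⟩
  have hhalf : n / 2 = m + 1 := by omega
  have htwo_mul (k : ℕ) (hk : k ∈ Icc 1 m) : 2 * (u * k) ≠ 0 := by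
    rw [mul_left_comm, Ne, hu.mul_right_eq_zero]
    have : ((2 * k : ℕ) : ZMod n) ≠ 0 := by
      rw [Ne, natCast_eq_zero_iff]
      rw [mem_Icc] at hk
      exact fun h => absurd (Nat.le_of_dvd (by omega) h) (by omega)
    exact_mod_cast this
  have hmaps (k : ℕ) (hk : k ∈ Icc 1 m) : (u * (k : ZMod n)).valMinAbs.natAbs ∈ Icc 1 m := by
    have hle := natAbs_valMinAbs_le (u * (k : ZMod n))
    have h0 : (u * (k : ZMod n)).valMinAbs.natAbs ≠ 0 := fun h => htwo_mul k hk <| by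
      rw [Int.natAbs_eq_zero, valMinAbs_eq_zero] at h
      rw [h, mul_zero]
    have hne_half : (u * (k : ZMod n)).valMinAbs.natAbs ≠ n / 2 := fun h =>
      htwo_mul k hk (two_mul_eq_zero_of_natAbs_valMinAbs_eq_half ⟨m + 1, by omega⟩ h)
    rw [mem_Icc]
    omega
  have hinj :
      Set.InjOn (fun k : ℕ => (u * (k : ZMod n)).valMinAbs.natAbs) (Icc 1 m : Set ℕ) := by
    intro k hk l hl hkl
    rw [coe_Icc, Set.mem_Icc] at hk hl
    have hkl' : (k : ZMod n) = l ∨ (k : ZMod n) = -l := by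
      rcases natAbs_valMinAbs_eq_natAbs_valMinAbs.mp hkl with h | h
      · exact Or.inl (hu.mul_left_cancel h)
      · exact Or.inr (hu.mul_left_cancel (h.trans (mul_neg u l).symm))
    rwa [← natAbs_valMinAbs_eq_natAbs_valMinAbs,
      natAbs_valMinAbs_natCast_of_le_half (by omega),
      natAbs_valMinAbs_natCast_of_le_half (by omega)] at hkl'
  refine prod_nbij _ hmaps hinj (surjOn_of_injOn_of_card_le _ hmaps hinj le_rfl) fun k _ => ?_
  exact (apply_natAbs_valMinAbs_of_neg_eq hf _).symm

end ZMod

namespace IsPrimitiveRoot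

variable {L : Type*} [Field L] [CharZero L] {ζ : L} {n : ℕ}

theorem exists_int_aeval_eq_of_forall_coprime [NeZero n] (hζ : IsPrimitiveRoot ζ n) (P : ℤ[X])
    (hP : ∀ t, t.Coprime n → aeval (ζ ^ t) P = aeval ζ P) :
    ∃ z : ℤ, aeval ζ P = z := by
  have hζℤ : IsIntegral ℤ ζ := hζ.isIntegral (NeZero.pos n)
  have : IsCyclotomicExtension {n} ℚ ℚ⟮ζ⟯ := by
    change IsCyclotomicExtension {n} ℚ ℚ⟮ζ⟯.toSubalgebra
    rw [adjoin_simple_toSubalgebra_of_isAlgebraic (hζℤ.tower_top (A := ℚ)).isAlgebraic]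
    exact hζ.adjoin_isCyclotomicExtension ℚ
  have := IsCyclotomicExtension.finiteDimensional {n} ℚ ℚ⟮ζ⟯
  have := IsCyclotomicExtension.isGalois {n} ℚ ℚ⟮ζ⟯
  set η := AdjoinSimple.gen ℚ ζ
  have hη : IsPrimitiveRoot η n :=
    hζ.of_map_of_injective (f := ℚ⟮ζ⟯.val) Subtype.val_injective
  have hfix (σ : Gal(ℚ⟮ζ⟯/ℚ)) : σ (aeval η P) = aeval η P := by
    obtain ⟨t, -, ht, hσ⟩ := hη.isPrimitiveRoot_iff.mp (hη.map_of_injective σ.injective)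
    have hσP := aeval_algHom_apply ((σ : ℚ⟮ζ⟯ →ₐ[ℚ] ℚ⟮ζ⟯).restrictScalars ℤ) η P
    simp only [AlgHom.restrictScalars_apply, AlgEquiv.coe_toAlgHom] at hσP
    apply Subtype.val_injective
    rw [← hσP, ← hσ, ← aeval_coe, ← aeval_coe]
    exact hP t ht
  obtain ⟨q, hq⟩ := (IsGalois.mem_range_algebraMap_iff_fixed _).mpr hfix
  have hqζ : algebraMap ℚ L q = aeval ζ P :=
    (congrArg Subtype.val hq).trans (aeval_coe _ η P).symm
  have hint : IsIntegral ℤ (aeval ζ P) := by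
    have h := (aeval (⟨ζ, hζℤ⟩ : integralClosure ℤ L) P).2
    rwa [← Subalgebra.aeval_coe] at h
  rw [← hqζ, isIntegral_algebraMap_iff (algebraMap ℚ L).injective] at hint
  obtain ⟨z, rfl⟩ := IsIntegrallyClosed.isIntegral_iff.mp hint
  exact ⟨z, by rw [← hqζ]; simp⟩

theorem exists_int_prod_Icc_sum_mul_pow {m : ℕ} (hn : n = 2 * m + 2) (hζ : IsPrimitiveRoot ζ n)
    {ι : Type*} (s : Finset ι) (c : ι → ℤ) (w : ι → L) (hw : ∀ j ∈ s, w j ^ n = 1)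
    (heven : ∀ k l, n ∣ k + l → ∑ j ∈ s, c j * w j ^ k = ∑ j ∈ s, c j * w j ^ l) :
    ∃ z : ℤ, ∏ k ∈ Icc 1 m, ∑ j ∈ s, (c j : L) * w j ^ k = z := by
  have : NeZero n := ⟨by omega⟩
  choose! e he using fun j hj => (hζ.eq_pow_of_pow_eq_one (hw j hj)).imp fun _ h => h.2
  let f : ZMod n → L := fun x => ∑ j ∈ s, c j * w j ^ x.val
  have hf_natCast (k : ℕ) : ∑ j ∈ s, c j * w j ^ k = f k := by
    refine sum_congr rfl fun j hj => ?_
    rw [ZMod.val_natCast, ← pow_eq_pow_mod k (hw j hj)]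
  have hf (x : ZMod n) : f (-x) = f x := by
    refine heven _ _ ((ZMod.natCast_eq_zero_iff _ _).mp ?_)
    push_cast
    rw [ZMod.natCast_zmod_val, ZMod.natCast_zmod_val, neg_add_cancel]
  let P : ℤ[X] := ∏ k ∈ Icc 1 m, ∑ j ∈ s, (c j : ℤ[X]) * X ^ (e j * k)
  have hP (t : ℕ) : aeval (ζ ^ t) P = ∏ k ∈ Icc 1 m, f (t * k) := by
    simp only [P, map_prod, map_sum, map_mul, map_intCast, aeval_X_pow]
    refine prod_congr rfl fun k _ => ?_
    rw [← Nat.cast_mul, ← hf_natCast]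
    refine sum_congr rfl fun j hj => ?_
    rw [← he j hj, ← pow_mul, ← pow_mul, mul_left_comm]
  have hP_one : aeval ζ P = ∏ k ∈ Icc 1 m, f k := by
    simpa only [pow_one, Nat.cast_one, one_mul] using hP 1
  obtain ⟨z, hz⟩ := hζ.exists_int_aeval_eq_of_forall_coprime P fun t ht => by
    rw [hP, hP_one]
    exact ZMod.prod_Icc_comp_unit_mul_of_neg_eq hn (ZMod.unitOfCoprime t ht).isUnit hf
  refine ⟨z, ?_⟩
  simp_rw [hf_natCast, ← hP_one, hz]

end IsPrimitiveRoot

theorem MulChar.apply_sq_pow_half_eq_one {R : Type*} [CommMonoidWithZero R] {p : ℕ}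
    [Fact p.Prime] (hp : p ≠ 2) (χ : MulChar (ZMod p) R) {x : ZMod p} (hx : x ≠ 0) :
    χ (x ^ 2) ^ ((p - 1) / 2) = 1 := by
  have hodd := Nat.odd_iff.mp ((Fact.out : p.Prime).odd_of_ne_two hp)
  rw [← map_pow, ← pow_mul, show 2 * ((p - 1) / 2) = p - 1 by omega,
    ZMod.pow_card_sub_one_eq_one hx, map_one]

theorem quadraticChar_one_add_inv_sq {F : Type*} [Field F] [Fintype F] [DecidableEq F] {x : F}
    (hx : x ≠ 0) : quadraticChar F (1 + x⁻¹ ^ 2) = quadraticChar F (1 + x ^ 2) := by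
  rw [show 1 + x⁻¹ ^ 2 = x⁻¹ ^ 2 * (1 + x ^ 2) by field_simp; ring, map_mul,
    quadraticChar_sq_one' (inv_ne_zero hx), one_mul]

theorem sum_legendreSym_mul_pow_eq_of_dvd_add {R : Type*} [CommRing R] [IsDomain R] [CharZero R]
    {p : ℕ} [Fact p.Prime] (hp : p ≠ 2) (χ : MulChar (ZMod p) R) {k l : ℕ}
    (hkl : (p - 1) / 2 ∣ k + l) :
    ∑ j ∈ Icc 1 ((p - 1) / 2), (legendreSym p (1 + (j : ℤ) ^ 2) : R) * χ ((j : ZMod p) ^ 2) ^ k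
      = ∑ j ∈ Icc 1 ((p - 1) / 2),
          (legendreSym p (1 + (j : ℤ) ^ 2) : R) * χ ((j : ZMod p) ^ 2) ^ l := by
  have hodd := (Fact.out : p.Prime).odd_of_ne_two hp
  have hp_mod := Nat.odd_iff.mp hodd
  let G (k : ℕ) (x : ZMod p) : R := (quadraticChar (ZMod p) (1 + x ^ 2) : R) * χ (x ^ 2) ^ k
  have hG (k : ℕ) : ∑ j ∈ Icc 1 ((p - 1) / 2), (legendreSym p (1 + (j : ℤ) ^ 2) : R) *
      χ ((j : ZMod p) ^ 2) ^ k = ∑ j ∈ Icc 1 (p / 2), G k j := by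
    rw [show (p - 1) / 2 = p / 2 by omega]
    refine sum_congr rfl fun j _ => ?_
    simp only [G, legendreSym, Int.cast_add, Int.cast_one, Int.cast_pow, Int.cast_natCast]
  have htwo (k : ℕ) : ∑ x ∈ univ.erase 0, G k x = 2 • ∑ j ∈ Icc 1 (p / 2), G k j :=
    ZMod.sum_erase_zero_eq_two_nsmul_sum_Icc hodd fun x => by simp only [G, neg_sq]
  have hinv (x : ZMod p) (hx : x ≠ 0) : G k x⁻¹ = G l x := by
    obtain ⟨d, hd⟩ := hkl
    have hχ : χ (x⁻¹ ^ 2) * χ (x ^ 2) = 1 := by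
      rw [← map_mul, ← mul_pow, inv_mul_cancel₀ hx, one_pow, map_one]
    have hpow : χ (x ^ 2) ^ (k + l) = 1 := by
      rw [hd, pow_mul, χ.apply_sq_pow_half_eq_one hp hx, one_pow]
    simp only [G, quadraticChar_one_add_inv_sq hx]
    congr 1
    calc χ (x⁻¹ ^ 2) ^ k = χ (x⁻¹ ^ 2) ^ k * χ (x ^ 2) ^ (k + l) := by rw [hpow, mul_one]
      _ = (χ (x⁻¹ ^ 2) * χ (x ^ 2)) ^ k * χ (x ^ 2) ^ l := by ring
      _ = χ (x ^ 2) ^ l := by rw [hχ, one_pow, one_mul]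
  have hsum : ∑ x ∈ univ.erase 0, G k x = ∑ x ∈ univ.erase 0, G l x := by
    refine sum_nbij' (·⁻¹) (·⁻¹) (fun x hx => ?_) (fun x hx => ?_) (fun x _ => inv_inv x)
      (fun x _ => inv_inv x) (fun x hx => ?_)
    · simpa using hx
    · simpa using hx
    · rw [← hinv x⁻¹ (inv_ne_zero (ne_of_mem_erase hx)), inv_inv]
  have h2 := (htwo k).symm.trans (hsum.trans (htwo l))
  rw [nsmul_eq_mul, nsmul_eq_mul, Nat.cast_ofNat] at h2
  rw [hG, hG, mul_left_cancel₀ two_ne_zero h2]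

theorem stmt8_general (p : ℕ) [Fact p.Prime] (hp4 : p % 4 = 1) (hp5 : 5 ≤ p)
    (χp : MulChar (ZMod p) ℂ) :
    ∃ z : ℤ,
      ∏ k ∈ Finset.Icc 1 ((p - 5) / 4),
        ∑ j ∈ Finset.Icc 1 ((p - 1) / 2),
          ((legendreSym p (1 + (j : ℤ) ^ 2) : ℤ) : ℂ) *
            (χp ^ k) (((j : ℕ) : ZMod p) ^ 2) = (z : ℂ) := by
  have hp2 : p ≠ 2 := by omega
  have hj0 (j : ℕ) (hj : j ∈ Icc 1 ((p - 1) / 2)) : (j : ZMod p) ≠ 0 := by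
    rw [mem_Icc] at hj
    rw [Ne, ZMod.natCast_eq_zero_iff]
    exact fun h => absurd (Nat.le_of_dvd (by omega) h) (by omega)
  have hζ := Complex.isPrimitiveRoot_exp ((p - 1) / 2) (by omega)
  obtain ⟨z, hz⟩ := hζ.exists_int_prod_Icc_sum_mul_pow (m := (p - 5) / 4) (by omega)
    (Icc 1 ((p - 1) / 2)) (fun j => legendreSym p (1 + (j : ℤ) ^ 2))
    (fun j => χp ((j : ZMod p) ^ 2)) (fun j hj => χp.apply_sq_pow_half_eq_one hp2 (hj0 j hj))
    fun k l hkl => sum_legendreSym_mul_pow_eq_of_dvd_add hp2 χp hkl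
  refine ⟨z, Eq.trans (prod_congr rfl fun k hk => sum_congr rfl fun j _ => ?_) hz⟩
  rw [MulChar.pow_apply' χp (by rw [mem_Icc] at hk; omega)]

theorem stmt8 (p : ℕ) [Fact p.Prime] (hp4 : p % 4 = 1) (hp5 : 5 ≤ p)
    (χp : MulChar (ZMod p) ℂ)
    (hgen : ∀ χ : MulChar (ZMod p) ℂ, ∃ m : ℕ, χ = χp ^ m) :
    ∃ z : ℤ,
      ∏ k ∈ Finset.Icc 1 ((p - 5) / 4),
        ∑ j ∈ Finset.Icc 1 ((p - 1) / 2),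
          ((legendreSym p (1 + (j : ℤ) ^ 2) : ℤ) : ℂ) *
            (χp ^ k) (((j : ℕ) : ZMod p) ^ 2) = (z : ℂ) :=
  stmt8_general p hp4 hp5 χp
end

section
/- Let p be an odd prime, n = (p-1)/2, and d an integer with (d/p) = -1. Then S(d,p) = det[((i^2 + d·j^2)/p)]_{1≤i,j≤n} = 0. -/
/-!
Write `χ` for the quadratic character of `𝔽_p`. Counting square roots,
`∑ₓ χ(x² + c) = ∑ₜ (1 + χ t) χ(t + c)`, and for `c ≠ 0` this is `-1`: the part `∑ₜ χ(t + c)`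
vanishes and `∑ₜ χ(t) χ(t + c)` is a rescaled Jacobi sum `J(χ, χ⁻¹) = -χ(-1)`. Since `x ↦ x²`
is even, the left side is also `χ(c) + 2 ∑ᵢ₌₁ⁿ χ(i² + c)`. For a nonresidue `c` this forces
`∑ᵢ₌₁ⁿ χ(i² + c) = 0`; with `c = d j²` these are the column sums of the matrix, so the all-ones
vector lies in its left kernel.
-/

open Finset

theorem MulChar.sum_mul_inv_add_eq_neg_one {F R : Type*} [Field F] [Fintype F] [CommRing R]
    [IsDomain R] {χ : MulChar F R} (hχ : χ ≠ 1) {c : F} (hc : c ≠ 0) :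
    ∑ t, χ t * χ⁻¹ (t + c) = -1 := by
  have hscale : ∀ x, χ (-c * x) * χ⁻¹ (-c * x + c) = χ (-1) * (χ x * χ⁻¹ (1 - x)) := by
    intro x
    have hcc : χ c * χ⁻¹ c = 1 := by
      rw [MulChar.inv_apply', ← map_mul, mul_inv_cancel₀ hc, map_one]
    rw [show -c * x + c = c * (1 - x) by ring, show -c * x = -1 * c * x by ring, map_mul,
      map_mul, map_mul]
    linear_combination (χ (-1) * χ x * χ⁻¹ (1 - x)) * hcc
  calc ∑ t, χ t * χ⁻¹ (t + c)
      = ∑ x, χ (-c * x) * χ⁻¹ (-c * x + c) :=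
        (Fintype.sum_equiv (Equiv.mulLeft₀ (-c) (neg_ne_zero.mpr hc)) _ _ fun _ => rfl).symm
    _ = χ (-1) * jacobiSum χ χ⁻¹ := by simp only [hscale, jacobiSum, mul_sum]
    _ = -1 := by
      rw [jacobiSum_nontrivial_inv hχ, mul_neg, ← map_mul, neg_one_mul, neg_neg, map_one]

theorem quadraticChar_sum_sq_add_eq_neg_one {F : Type*} [Field F] [Fintype F] [DecidableEq F]
    (hF : ringChar F ≠ 2) {c : F} (hc : c ≠ 0) :
    ∑ x, quadraticChar F (x ^ 2 + c) = -1 := by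
  set χ := quadraticChar F
  have hfiber : ∑ x, χ (x ^ 2 + c) = ∑ t, (χ t + 1) * χ (t + c) := by
    rw [← sum_fiberwise' univ (· ^ 2) fun t => χ (t + c)]
    refine sum_congr rfl fun t _ => ?_
    rw [sum_const, ← quadraticChar_card_sqrts hF t, nsmul_eq_mul, Set.toFinset_ofPred]
  have hshift : ∑ t, χ (t + c) = 0 :=
    (Equiv.sum_comp (Equiv.addRight c) χ).trans (quadraticChar_sum_zero hF)
  have hcorrelation : ∑ t, χ t * χ (t + c) = -1 := by
    simpa only [(quadraticChar_isQuadratic F).inv] using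
      MulChar.sum_mul_inv_add_eq_neg_one (quadraticChar_ne_one hF) hc
  simp only [hfiber, add_mul, one_mul, sum_add_distrib, hshift, hcorrelation, add_zero]

theorem ZMod.sum_eq_add_two_nsmul_sum_of_even {M : Type*} [AddCommMonoid M] {p : ℕ} [NeZero p]
    (hp : p % 2 = 1) {g : ZMod p → M} (hg : Function.Even g) :
    ∑ x, g x = g 0 + 2 • ∑ i ∈ range (p / 2), g (i + 1) := by
  set n := p / 2
  have hrange : ∑ x, g x = ∑ k ∈ range (n + 1 + n), g k := by
    rw [show n + 1 + n = p by omega]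
    exact (sum_nbij' (fun k : ℕ => (k : ZMod p)) ZMod.val (by simp)
      (fun x _ => mem_range.mpr x.val_lt) (fun k hk => ZMod.val_cast_of_lt (mem_range.mp hk))
      (fun x _ => ZMod.natCast_zmod_val x) fun _ _ => rfl).symm
  -- `n + 1 + k ≡ -(n - k)` modulo `p = 2n + 1`
  have hreflect : ∑ k ∈ range n, g ↑(n + 1 + k) = ∑ i ∈ range n, g (i + 1) := by
    rw [← sum_range_reflect (fun i : ℕ => g (i + 1))]
    refine sum_congr rfl fun k hk => ?_
    have hkn : k < n := mem_range.mp hk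
    rw [← hg]
    congr 1
    rw [neg_eq_iff_add_eq_zero, ← ZMod.natCast_self p,
      ← show n + 1 + k + (n - 1 - k + 1) = p by omega]
    push_cast
    ring
  rw [hrange, sum_range_add, sum_range_succ', hreflect, two_nsmul]
  push_cast
  abel

theorem quadraticChar_sum_half_sq_add_eq_zero {p : ℕ} [Fact p.Prime] (hp2 : p ≠ 2)
    {c : ZMod p} (hc : quadraticChar (ZMod p) c = -1) :
    ∑ i : Fin ((p - 1) / 2), quadraticChar (ZMod p) (((i : ZMod p) + 1) ^ 2 + c) = 0 := by
  have hF : ringChar (ZMod p) ≠ 2 := by rwa [ZMod.ringChar_zmod_n]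
  have hc0 : c ≠ 0 := by
    rintro rfl
    simp at hc
  have hodd : p % 2 = 1 := (Nat.Prime.mod_two_eq_one_iff_ne_two Fact.out).mpr hp2
  have hsum := ZMod.sum_eq_add_two_nsmul_sum_of_even hodd
    (g := fun x => quadraticChar (ZMod p) (x ^ 2 + c)) fun x => by simp only [neg_sq]
  rw [quadraticChar_sum_sq_add_eq_neg_one hF hc0, zero_pow two_ne_zero, zero_add, hc,
    nsmul_eq_mul, Nat.cast_ofNat] at hsum
  rw [show (p - 1) / 2 = p / 2 by omega, Fin.sum_univ_eq_sum_range
    (fun i => quadraticChar (ZMod p) (((i : ZMod p) + 1) ^ 2 + c))]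
  linarith

theorem stmt11 (p : ℕ) [Fact p.Prime] (hp2 : p ≠ 2) (d : ℤ)
    (hd : legendreSym p d = -1) :
    (Matrix.of fun i j : Fin ((p - 1) / 2) =>
        legendreSym p (((i : ℤ) + 1) ^ 2 + d * ((j : ℤ) + 1) ^ 2)).det = 0 := by
  have hp3 : 3 ≤ p := (Nat.Prime.two_le Fact.out).lt_of_ne' hp2
  refine Matrix.exists_vecMul_eq_zero_iff.mp ⟨fun _ => 1, Function.ne_iff.mpr
    ⟨⟨0, by omega⟩, one_ne_zero⟩, funext fun j => ?_⟩
  have hj : (j : ZMod p) + 1 ≠ 0 := by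
    rw [← Nat.cast_succ, Ne, ZMod.natCast_eq_zero_iff]
    exact Nat.not_dvd_of_pos_of_lt j.succ_pos (by omega)
  have hc : quadraticChar (ZMod p) (d * ((j : ZMod p) + 1) ^ 2) = -1 := by
    rw [map_mul, quadraticChar_sq_one' hj, mul_one]
    exact hd
  simp only [Matrix.vecMul, dotProduct, one_mul, Matrix.of_apply, Pi.zero_apply, legendreSym]
  push_cast
  exact quadraticChar_sum_half_sq_add_eq_zero hp2 hc
end

section
/- Let p ≡ 1 (mod 4) be a prime, n = (p-1)/2, and let d be a quadratic residue modulo p. Then S(d,p) = sgn(π_p(d)) · S(1,p), where S(d,p) = det[((i^2+d·j^2)/p)]_{1≤i,j≤n} and π_p(d) is the permutation of {1^2,...,n^2 mod p} induced by multiplication by d. -/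
/-! The squares of `1, …, (p-1)/2` are exactly the nonzero quadratic residues mod `p`, each hit
once. Transporting `π_p(d)` along this enumeration gives a permutation `σ` of the column
indices with `σ(j)² ≡ d j²`, so the matrix for `d` is the matrix for `1` with its columns
permuted by `σ`, and the determinant picks up `sgn σ = sgn π_p(d)`. -/

open scoped Classical

lemma legendreSym_congr (p : ℕ) [Fact p.Prime] {a b : ℤ} (h : (a : ZMod p) = b) :
    legendreSym p a = legendreSym p b := by
  unfold legendreSym
  rw [h]

namespace ZMod

lemma natCast_ne_zero_of_pos_of_lt {n k : ℕ} (h0 : 0 < k) (hk : k < n) : (k : ZMod n) ≠ 0 := by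
  rw [Ne, natCast_eq_zero_iff]
  exact Nat.not_dvd_of_pos_of_lt h0 hk

lemma eq_of_natCast_sq_eq {p : ℕ} [Fact p.Prime] {a b : ℕ} (hab : a + b < p)
    (h : (a : ZMod p) ^ 2 = (b : ZMod p) ^ 2) : a = b := by
  rw [sq_eq_sq_iff_eq_or_eq_neg] at h
  rcases h with h | h
  · rwa [natCast_eq_natCast_iff', Nat.mod_eq_of_lt (by omega), Nat.mod_eq_of_lt (by omega)] at h
  · have hsum : ((a + b : ℕ) : ZMod p) = 0 := by push_cast; rw [h, neg_add_cancel]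
    have := Nat.eq_zero_of_dvd_of_lt ((natCast_eq_zero_iff _ _).mp hsum) hab
    omega

lemma exists_sq_eq_natCast_sq {n : ℕ} [NeZero n] (hn : Odd n) (y : ZMod n) :
    ∃ k ≤ (n - 1) / 2, y ^ 2 = (k : ZMod n) ^ 2 := by
  obtain ⟨m, rfl⟩ := hn
  have hlt := y.val_lt
  by_cases hsmall : y.val ≤ m
  · exact ⟨y.val, by omega, by rw [natCast_zmod_val]⟩
  · refine ⟨2 * m + 1 - y.val, by omega, ?_⟩
    rw [Nat.cast_sub hlt.le, natCast_self, natCast_zmod_val]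
    ring

end ZMod

section HalfSystem

variable (p : ℕ) [Fact p.Prime]

lemma natCast_succ_ne_zero (k : Fin ((p - 1) / 2)) : (((k : ℕ) + 1 : ℕ) : ZMod p) ≠ 0 :=
  ZMod.natCast_ne_zero_of_pos_of_lt k.val.succ_pos (by have := k.2; omega)

/-- `Fin ((p - 1) / 2)` is `0`-based: `k` stands for the paper's index `k + 1`. -/
noncomputable def squareOfHalfSystem (k : Fin ((p - 1) / 2)) : {x : (ZMod p)ˣ // IsSquare x} :=
  ⟨Units.mk0 _ (natCast_succ_ne_zero p k) ^ 2, IsSquare.sq _⟩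

@[simp]
lemma coe_squareOfHalfSystem (k : Fin ((p - 1) / 2)) :
    ((squareOfHalfSystem p k : (ZMod p)ˣ) : ZMod p) = (((k : ℕ) + 1 : ℕ) : ZMod p) ^ 2 := by
  simp [squareOfHalfSystem]

lemma squareOfHalfSystem_injective : Function.Injective (squareOfHalfSystem p) := by
  intro a b hab
  have h := congrArg (fun x => ((x.1 : (ZMod p)ˣ) : ZMod p)) hab
  simp only [coe_squareOfHalfSystem] at h
  have := ZMod.eq_of_natCast_sq_eq (by have := a.2; have := b.2; omega) h
  exact Fin.ext (by omega)

lemma squareOfHalfSystem_surjective (hp : Odd p) :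
    Function.Surjective (squareOfHalfSystem p) := by
  rintro ⟨x, y, rfl⟩
  obtain ⟨k, hk, hyk⟩ := ZMod.exists_sq_eq_natCast_sq hp (y : ZMod p)
  have hk0 : k ≠ 0 := by
    rintro rfl
    simp at hyk
  refine ⟨⟨k - 1, by omega⟩, Subtype.ext (Units.ext ?_)⟩
  rw [coe_squareOfHalfSystem, Nat.sub_add_cancel (Nat.pos_of_ne_zero hk0), ← hyk]
  simp [sq]

lemma squareOfHalfSystem_bijective (hp : Odd p) : Function.Bijective (squareOfHalfSystem p) :=
  ⟨squareOfHalfSystem_injective p, squareOfHalfSystem_surjective p hp⟩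

end HalfSystem

theorem stmt12_general (p : ℕ) [Fact p.Prime] (hp4 : p % 4 = 1) (d : ℤ)
    (u : (ZMod p)ˣ) (hud : (u : ZMod p) = (d : ZMod p)) (hu : IsSquare u) :
    (Matrix.of fun i j : Fin ((p - 1) / 2) =>
        legendreSym p (((i : ℤ) + 1) ^ 2 + d * ((j : ℤ) + 1) ^ 2)).det =
      (Equiv.Perm.sign (piP p u hu) : ℤ) *
        (Matrix.of fun i j : Fin ((p - 1) / 2) =>
          legendreSym p (((i : ℤ) + 1) ^ 2 + ((j : ℤ) + 1) ^ 2)).det := by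
  let e := Equiv.ofBijective _ (squareOfHalfSystem_bijective p (Nat.odd_iff.mpr (by omega)))
  let σ := e.symm.permCongr (piP p u hu)
  have hσ (j : Fin ((p - 1) / 2)) :
      (((σ j : ℕ) + 1 : ℕ) : ZMod p) ^ 2 = d * (((j : ℕ) + 1 : ℕ) : ZMod p) ^ 2 := by
    have h : e (σ j) = piP p u hu (e j) := by simp [σ, Equiv.permCongr_apply]
    simpa [e, piP, hud] using congrArg (fun x => ((x.1 : (ZMod p)ˣ) : ZMod p)) h
  have hcols : (Matrix.of fun i j : Fin ((p - 1) / 2) =>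
        legendreSym p (((i : ℤ) + 1) ^ 2 + d * ((j : ℤ) + 1) ^ 2)) =
      (Matrix.of fun i j : Fin ((p - 1) / 2) =>
        legendreSym p (((i : ℤ) + 1) ^ 2 + ((j : ℤ) + 1) ^ 2)).submatrix id σ := by
    ext i j
    refine legendreSym_congr p ?_
    have := hσ j
    push_cast at this ⊢
    rw [this, id]
  rw [hcols, Matrix.det_permute', Equiv.Perm.sign_permCongr]
  norm_cast

theorem stmt12 (p : ℕ) [Fact p.Prime] (hp4 : p % 4 = 1) (d : ℤ)
    (hd : legendreSym p d = 1)
    (u : (ZMod p)ˣ) (hud : (u : ZMod p) = (d : ZMod p)) (hu : IsSquare u) :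
    (Matrix.of fun i j : Fin ((p - 1) / 2) =>
        legendreSym p (((i : ℤ) + 1) ^ 2 + d * ((j : ℤ) + 1) ^ 2)).det =
      (Equiv.Perm.sign (piP p u hu) : ℤ) *
        (Matrix.of fun i j : Fin ((p - 1) / 2) =>
          legendreSym p (((i : ℤ) + 1) ^ 2 + ((j : ℤ) + 1) ^ 2)).det :=
  stmt12_general p hp4 d u hud hu
end
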